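/- If a unit-speed spherical curve ξ = (x,y,z) has spherical angular momentum K(z) = −c/z with 0 < c < 1/2, then z satisfies z'² = (z²(1−z²) − c²)/z², and the function z(s) = √((1 + √(1−4c²) sin 2s)/2) solves this equation with the constraint 1 − √(1−4c²) < 2z² < 1 + √(1−4c²). -/

import Mathlib

open Real

/-!
On the unit sphere, Lagrange's identity
`(x² + y²)(x'² + y'²) = (x x' + y y')² + (x' y - x y')²` together with `x x' + y y' = -z z'`
gives `z² + z'² + K² = 1` for a unit-speed curve, where `K = x' y - x y'`; substituting
`K = -c/z` is the ODE. For the explicit profile, `z² = (1 + b sin 2s)/2` with `b² = 1 - 4c²`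
gives `z²(1 - z²) - c² = b² cos² 2s / 4 = z² z'²`.
-/

section SphericalCurve

variable {x y z : ℝ → ℝ} {s : ℝ}

theorem mul_deriv_add_mul_deriv_add_mul_deriv_eq_zero {r : ℝ}
    (hx : DifferentiableAt ℝ x s) (hy : DifferentiableAt ℝ y s) (hz : DifferentiableAt ℝ z s)
    (hsphere : ∀ t, x t ^ 2 + y t ^ 2 + z t ^ 2 = r) :
    x s * deriv x s + y s * deriv y s + z s * deriv z s = 0 := by
  have hsum := ((hx.hasDerivAt.pow 2).add (hy.hasDerivAt.pow 2)).add (hz.hasDerivAt.pow 2)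
  have hconst : HasDerivAt (fun t => x t ^ 2 + y t ^ 2 + z t ^ 2) 0 s := by
    simpa only [hsphere] using hasDerivAt_const s r
  have := hsum.unique hconst
  norm_num at this
  linarith

theorem sq_add_sq_deriv_add_sq_angularMomentum_eq_one
    (hx : DifferentiableAt ℝ x s) (hy : DifferentiableAt ℝ y s) (hz : DifferentiableAt ℝ z s)
    (hsphere : ∀ t, x t ^ 2 + y t ^ 2 + z t ^ 2 = 1)
    (hunit : deriv x s ^ 2 + deriv y s ^ 2 + deriv z s ^ 2 = 1) :
    z s ^ 2 + deriv z s ^ 2 + (deriv x s * y s - x s * deriv y s) ^ 2 = 1 := by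
  have horth := mul_deriv_add_mul_deriv_add_mul_deriv_eq_zero hx hy hz hsphere
  linear_combination (deriv x s ^ 2 + deriv y s ^ 2) * hsphere s + (1 - z s ^ 2) * hunit
    - (x s * deriv x s + y s * deriv y s - z s * deriv z s) * horth

theorem deriv_sq_eq_of_angularMomentum_eq {c : ℝ}
    (hx : DifferentiableAt ℝ x s) (hy : DifferentiableAt ℝ y s) (hz : DifferentiableAt ℝ z s)
    (hzs : z s ≠ 0) (hsphere : ∀ t, x t ^ 2 + y t ^ 2 + z t ^ 2 = 1)
    (hunit : deriv x s ^ 2 + deriv y s ^ 2 + deriv z s ^ 2 = 1)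
    (hmom : deriv x s * y s - x s * deriv y s = -c / z s) :
    deriv z s ^ 2 = (z s ^ 2 * (1 - z s ^ 2) - c ^ 2) / z s ^ 2 := by
  have hid := sq_add_sq_deriv_add_sq_angularMomentum_eq_one hx hy hz hsphere hunit
  rw [hmom, div_pow, neg_sq] at hid
  field_simp at hid ⊢
  linear_combination hid

end SphericalCurve

section CatenaryProfile

noncomputable def catenaryProfile (b s : ℝ) : ℝ := √((1 + b * sin (2 * s)) / 2)

variable {b : ℝ}

theorem one_add_mul_sin_pos (hb : |b| < 1) (s : ℝ) : 0 < 1 + b * sin (2 * s) := by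
  have : |b * sin (2 * s)| < 1 := by
    rw [abs_mul]
    exact (mul_le_of_le_one_right (abs_nonneg b) (abs_sin_le_one _)).trans_lt hb
  linarith [neg_abs_le (b * sin (2 * s))]

theorem catenaryProfile_sq (hb : |b| < 1) (s : ℝ) :
    catenaryProfile b s ^ 2 = (1 + b * sin (2 * s)) / 2 :=
  sq_sqrt (by linarith [one_add_mul_sin_pos hb s])

theorem hasDerivAt_catenaryProfile (hb : |b| < 1) (s : ℝ) :
    HasDerivAt (catenaryProfile b) (b * cos (2 * s) / (2 * catenaryProfile b s)) s := by
  have hsin : HasDerivAt (fun t => sin (2 * t)) (cos (2 * s) * 2) s := by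
    simpa using ((hasDerivAt_id s).const_mul 2).sin
  have hradicand := ((hsin.const_mul b).const_add 1).div_const 2
  exact (hradicand.sqrt (by linarith [one_add_mul_sin_pos hb s])).congr_deriv
    (by rw [catenaryProfile]; ring)

theorem deriv_catenaryProfile_sq (hb : |b| < 1) (s : ℝ) :
    deriv (catenaryProfile b) s ^ 2 =
      (catenaryProfile b s ^ 2 * (1 - catenaryProfile b s ^ 2) - (1 - b ^ 2) / 4) /
        catenaryProfile b s ^ 2 := by
  have hden := (one_add_mul_sin_pos hb s).ne'
  rw [(hasDerivAt_catenaryProfile hb s).deriv]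
  simp only [div_pow, mul_pow, catenaryProfile_sq hb s]
  field_simp
  linear_combination 4 * b ^ 2 * sin_sq_add_cos_sq (2 * s)

theorem catenaryProfile_sq_bounds (hb : |b| < 1) (hb₀ : 0 < b) {s : ℝ}
    (hs : sin (2 * s) ^ 2 ≠ 1) :
    1 - b < 2 * catenaryProfile b s ^ 2 ∧ 2 * catenaryProfile b s ^ 2 < 1 + b := by
  have hsin : |sin (2 * s)| < 1 :=
    (sq_lt_one_iff_abs_lt_one _).mp (lt_of_le_of_ne (sin_sq_le_one _) hs)
  rw [abs_lt] at hsin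
  rw [catenaryProfile_sq hb s]
  constructor <;> nlinarith

end CatenaryProfile

/-- If a unit-speed spherical curve ξ = (x,y,z), z > 0, has spherical
angular momentum K = −c/z with 0 < c < 1/2, then z'² = (z²(1−z²) − c²)/z²; moreover
the function z(s) = √((1 + √(1−4c²) sin 2s)/2) solves this ODE, with the constraint
1 − √(1−4c²) < 2z² < 1 + √(1−4c²) (away from the extremal points of sin 2s). -/
theorem catenary_z_ode_and_solution
    (c : ℝ) (hc : 0 < c) (hc' : c < 1/2)
    (x y z : ℝ → ℝ)
    (hx : Differentiable ℝ x) (hy : Differentiable ℝ y) (hz : Differentiable ℝ z)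
    (hzpos : ∀ s, 0 < z s)
    (hsphere : ∀ s, x s ^ 2 + y s ^ 2 + z s ^ 2 = 1)
    (hunit : ∀ s, deriv x s ^ 2 + deriv y s ^ 2 + deriv z s ^ 2 = 1)
    (hmom : ∀ s, deriv x s * y s - x s * deriv y s = -c / z s)
    (zc : ℝ → ℝ)
    (hzc : ∀ s, zc s = Real.sqrt ((1 + Real.sqrt (1 - 4*c^2) * Real.sin (2*s)) / 2)) :
    (∀ s, deriv z s ^ 2 = (z s ^ 2 * (1 - z s ^ 2) - c ^ 2) / z s ^ 2) ∧
    (∀ s, deriv zc s ^ 2 = (zc s ^ 2 * (1 - zc s ^ 2) - c ^ 2) / zc s ^ 2) ∧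
    (∀ s, Real.sin (2*s) ^ 2 ≠ 1 →
      1 - Real.sqrt (1 - 4*c^2) < 2 * zc s ^ 2 ∧
      2 * zc s ^ 2 < 1 + Real.sqrt (1 - 4*c^2)) := by
  have hdisc : 0 < 1 - 4 * c ^ 2 := by nlinarith
  set b := √(1 - 4 * c ^ 2)
  have hb₀ : 0 < b := sqrt_pos.mpr hdisc
  have hb_sq : b ^ 2 = 1 - 4 * c ^ 2 := sq_sqrt hdisc.le
  have hb : |b| < 1 := by rw [abs_of_pos hb₀]; nlinarith
  have hzc_eq : zc = catenaryProfile b := funext hzc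
  have hc_sq : (1 - b ^ 2) / 4 = c ^ 2 := by rw [hb_sq]; ring
  subst hzc_eq
  refine ⟨fun s => ?_, fun s => ?_, fun s hs => catenaryProfile_sq_bounds hb hb₀ hs⟩
  · exact deriv_sq_eq_of_angularMomentum_eq (hx s) (hy s) (hz s) (hzpos s).ne' hsphere
      (hunit s) (hmom s)
  · rw [deriv_catenaryProfile_sq hb s, hc_sq]
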